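/- Let F = {f_1, …, f_m} be a t-sparse family of coverage functions on ground set [n] with multilinear extensions F_i, and let k ≥ 2. Let Y : [n] → Δ_k be a fractional k-coloring, let Z ⊆ [n] be its set of fractional elements, and let D ⊆ Z satisfy |S ∩ D| ≤ 1 for every S ∈ S and |D| > mk. Then there exists a fractional k-coloring Y' : [n] → Δ_k such that Y'_j = Y_j for all j ∉ D, Y' has at most |Z| − 1 fractional elements, and F_i(Y'_ℓ) = F_i(Y_ℓ) for all i ∈ [m] and ℓ ∈ [k]. -/

import Mathlib

open Finset

/-- Coverage function determined by a multiset `C` of subsets of `[n]`: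
`f(T) = Σ_{S ∈ C} min(|S ∩ T|, 1)`. -/
noncomputable def cov {n : ℕ} (C : Multiset (Finset (Fin n))) (T : Finset (Fin n)) : ℝ :=
  (C.map (fun s => min ((s ∩ T).card : ℝ) 1)).sum

/-- Multilinear extension of a set function `f : 2^{[n]} → ℝ`. -/
noncomputable def mlext {n : ℕ} (f : Finset (Fin n) → ℝ) (x : Fin n → ℝ) : ℝ :=
  ∑ T : Finset (Fin n), f T * (∏ i ∈ T, x i) * (∏ j ∈ Tᶜ, (1 - x j))

/-- `Y` is a fractional `k`-coloring: each `Y j` lies in the simplex `Δ_k`. -/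
def IsFracColoring {n k : ℕ} (Y : Fin n → Fin k → ℝ) : Prop :=
  ∀ j : Fin n, (∀ ℓ, 0 ≤ Y j ℓ ∧ Y j ℓ ≤ 1) ∧ (∑ ℓ, Y j ℓ) = 1

lemma sum_prod_prod {n : ℕ} (u : Finset (Fin n)) (x : Fin n → ℝ) :
    ∑ T ∈ u.powerset, (∏ i ∈ T, x i) * (∏ j ∈ u \ T, (1 - x j)) = 1 := by
  have h := Finset.prod_add (fun i => x i) (fun i => 1 - x i) u
  simp only [add_sub_cancel] at h
  simp only [Finset.prod_const_one] at h
  exact h.symm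

lemma mlext_one {n : ℕ} (x : Fin n → ℝ) : mlext (fun _ => 1) x = 1 := by
  unfold mlext
  have := sum_prod_prod (Finset.univ : Finset (Fin n)) x
  rw [Finset.powerset_univ] at this
  simpa [compl_eq_univ_sdiff] using this

lemma sum_PQ {n : ℕ} (x : Fin n → ℝ) :
    ∑ T : Finset (Fin n), (∏ i ∈ T, x i) * (∏ j ∈ Tᶜ, (1 - x j)) = 1 := by
  have := sum_prod_prod (Finset.univ : Finset (Fin n)) x
  rw [Finset.powerset_univ] at this
  simpa [compl_eq_univ_sdiff] using this

lemma mlext_ind {n : ℕ} (s : Finset (Fin n)) (x : Fin n → ℝ) :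
    ∑ T : Finset (Fin n), (if s ∩ T = ∅ then (1:ℝ) else 0) * ((∏ i ∈ T, x i) * (∏ j ∈ Tᶜ, (1 - x j)))
      = ∏ j ∈ s, (1 - x j) := by
  have h1 : ∀ T : Finset (Fin n),
      (if s ∩ T = ∅ then (1:ℝ) else 0) * ((∏ i ∈ T, x i) * (∏ j ∈ Tᶜ, (1 - x j)))
        = if s ∩ T = ∅ then (∏ i ∈ T, x i) * (∏ j ∈ Tᶜ, (1 - x j)) else 0 := by
    intro T; split <;> ring
  simp only [h1]
  rw [Finset.sum_ite, Finset.sum_const_zero, add_zero]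
  have hfilt : Finset.univ.filter (fun T : Finset (Fin n) => s ∩ T = ∅) = (sᶜ).powerset := by
    ext T
    simp only [Finset.mem_filter, Finset.mem_univ, true_and, Finset.mem_powerset]
    constructor
    · intro h j hj
      simp only [Finset.mem_compl]
      intro hjs
      have : j ∈ s ∩ T := Finset.mem_inter.2 ⟨hjs, hj⟩
      simp [h] at this
    · intro h
      ext j
      simp only [Finset.mem_inter, Finset.notMem_empty, iff_false, not_and]
      intro hjs hjT
      exact (Finset.mem_compl.1 (h hjT)) hjs
  rw [hfilt]
  have h2 : ∀ T ∈ (sᶜ).powerset,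
      (∏ i ∈ T, x i) * (∏ j ∈ Tᶜ, (1 - x j))
        = (∏ j ∈ s, (1 - x j)) * ((∏ i ∈ T, x i) * (∏ j ∈ sᶜ \ T, (1 - x j))) := by
    intro T hT
    rw [Finset.mem_powerset] at hT
    have hu : Tᶜ = s ∪ (sᶜ \ T) := by
      ext j
      simp only [Finset.mem_compl, Finset.mem_union, Finset.mem_sdiff]
      by_cases hs : j ∈ s
      · simp only [hs, true_or, iff_true]
        intro hjT
        exact (Finset.mem_compl.1 (hT hjT)) hs
      · tauto
    have hd : Disjoint s (sᶜ \ T) :=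
      Disjoint.mono_right Finset.sdiff_subset disjoint_compl_right
    rw [hu, Finset.prod_union hd]
    ring
  rw [Finset.sum_congr rfl h2, ← Finset.mul_sum, sum_prod_prod (sᶜ) x, mul_one]

lemma mlext_single {n : ℕ} (s : Finset (Fin n)) (x : Fin n → ℝ) :
    mlext (fun T => min (((s ∩ T).card : ℝ)) 1) x = 1 - ∏ j ∈ s, (1 - x j) := by
  unfold mlext
  have hm : ∀ T : Finset (Fin n),
      min (((s ∩ T).card : ℝ)) 1 = 1 - (if s ∩ T = ∅ then (1:ℝ) else 0) := by
    intro T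
    rcases (s ∩ T).eq_empty_or_nonempty with h | h
    · simp [h]
    · rw [if_neg (Finset.nonempty_iff_ne_empty.1 h)]
      have : 1 ≤ ((s ∩ T).card : ℝ) := by
        exact_mod_cast Finset.card_pos.2 h
      simp [min_eq_right this]
  simp only [hm, sub_mul, one_mul]
  rw [Finset.sum_sub_distrib]
  have := mlext_ind s x
  have h2 : ∑ T : Finset (Fin n),
      (if s ∩ T = ∅ then (1:ℝ) else 0) * (∏ i ∈ T, x i) * (∏ j ∈ Tᶜ, (1 - x j))
      = ∏ j ∈ s, (1 - x j) := by
    rw [← this]; apply Finset.sum_congr rfl; intro T _; ring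
  rw [h2, sum_PQ x]

lemma mlext_cov {n : ℕ} (C : Multiset (Finset (Fin n))) (x : Fin n → ℝ) :
    mlext (cov C) x = (C.map (fun s => 1 - ∏ j ∈ s, (1 - x j))).sum := by
  induction C using Multiset.induction with
  | empty => simp [cov, mlext]
  | cons a C ih =>
    have hc : ∀ T, cov (a ::ₘ C) T = min (((a ∩ T).card : ℝ)) 1 + cov C T := by
      intro T; simp [cov]
    have : mlext (cov (a ::ₘ C)) x
        = mlext (fun T => min (((a ∩ T).card : ℝ)) 1) x + mlext (cov C) x := by
      unfold mlext
      rw [← Finset.sum_add_distrib]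
      apply Finset.sum_congr rfl; intro T _
      rw [hc]; ring
    rw [this, mlext_single, ih]
    simp

lemma per_set {n : ℕ} (s D : Finset (Fin n)) (hs : (s ∩ D).card ≤ 1)
    (x y : Fin n → ℝ) (hxy : ∀ j ∉ D, x j = y j) :
    (1 - ∏ j ∈ s, (1 - x j))
      = (1 - ∏ j ∈ s, (1 - y j))
        + ∑ j ∈ D, (if j ∈ s then ∏ j' ∈ s.erase j, (1 - y j') else 0) * (x j - y j) := by
  rcases (s ∩ D).eq_empty_or_nonempty with h | ⟨j0, hj0⟩
  · have hx : ∀ j ∈ s, (1 - x j) = (1 - y j) := by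
      intro j hj
      have : j ∉ D := by
        intro hD
        have : j ∈ s ∩ D := Finset.mem_inter.2 ⟨hj, hD⟩
        simp [h] at this
      rw [hxy j this]
    rw [Finset.prod_congr rfl hx]
    have hz : ∀ j ∈ D, (if j ∈ s then ∏ j' ∈ s.erase j, (1 - y j') else 0) * (x j - y j) = 0 := by
      intro j hj
      have : j ∉ s := by
        intro hjs
        have : j ∈ s ∩ D := Finset.mem_inter.2 ⟨hjs, hj⟩
        simp [h] at this
      rw [if_neg this, zero_mul]
    rw [Finset.sum_congr rfl hz]
    simp
  · have hsingle : s ∩ D = {j0} := by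
      apply Finset.eq_singleton_iff_unique_mem.2
      exact ⟨hj0, fun j hj => Finset.card_le_one.1 hs j hj j0 hj0⟩
    have hj0s : j0 ∈ s := (Finset.mem_inter.1 hj0).1
    have hj0D : j0 ∈ D := (Finset.mem_inter.1 hj0).2
    have herase : ∀ j ∈ s.erase j0, j ∉ D := by
      intro j hj hD
      have hjs : j ∈ s := Finset.mem_of_mem_erase hj
      have : j ∈ s ∩ D := Finset.mem_inter.2 ⟨hjs, hD⟩
      rw [hsingle] at this
      exact (Finset.ne_of_mem_erase hj) (Finset.mem_singleton.1 this)
    have hpx : ∏ j ∈ s, (1 - x j) = (1 - x j0) * ∏ j ∈ s.erase j0, (1 - y j) := by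
      rw [← Finset.mul_prod_erase s _ hj0s]
      congr 1
      exact Finset.prod_congr rfl (fun j hj => by rw [hxy j (herase j hj)])
    have hpy : ∏ j ∈ s, (1 - y j) = (1 - y j0) * ∏ j ∈ s.erase j0, (1 - y j) := by
      rw [← Finset.mul_prod_erase s _ hj0s]
    have hsum : ∑ j ∈ D, (if j ∈ s then ∏ j' ∈ s.erase j, (1 - y j') else 0) * (x j - y j)
        = (∏ j' ∈ s.erase j0, (1 - y j')) * (x j0 - y j0) := by
      rw [Finset.sum_eq_single j0]
      · rw [if_pos hj0s]
      · intro j hj hne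
        have : j ∉ s := by
          intro hjs
          have : j ∈ s ∩ D := Finset.mem_inter.2 ⟨hjs, hj⟩
          rw [hsingle] at this
          exact hne (Finset.mem_singleton.1 this)
        rw [if_neg this, zero_mul]
      · intro h; exact absurd hj0D h
    rw [hpx, hpy, hsum]
    ring

lemma mlext_cov_affine {n : ℕ} (C : Multiset (Finset (Fin n))) (D : Finset (Fin n))
    (hInd : ∀ s ∈ C, (s ∩ D).card ≤ 1) (x y : Fin n → ℝ) (hxy : ∀ j ∉ D, x j = y j) :
    mlext (cov C) x = mlext (cov C) y
      + ∑ j ∈ D, (C.map (fun s => if j ∈ s then ∏ j' ∈ s.erase j, (1 - y j') else 0)).sum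
          * (x j - y j) := by
  rw [mlext_cov, mlext_cov]
  induction C using Multiset.induction with
  | empty => simp
  | cons a C ih =>
    have ha : (a ∩ D).card ≤ 1 := hInd a (Multiset.mem_cons_self a C)
    have ih' := ih (fun s hs => hInd s (Multiset.mem_cons_of_mem hs))
    simp only [Multiset.map_cons, Multiset.sum_cons]
    rw [per_set a D ha x y hxy]
    rw [ih']
    have hsplit : ∑ j ∈ D, ((if j ∈ a then ∏ j' ∈ a.erase j, (1 - y j') else 0)
            + (C.map (fun s => if j ∈ s then ∏ j' ∈ s.erase j, (1 - y j') else 0)).sum) * (x j - y j)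
        = ∑ j ∈ D, (if j ∈ a then ∏ j' ∈ a.erase j, (1 - y j') else 0) * (x j - y j)
          + ∑ j ∈ D, (C.map (fun s => if j ∈ s then ∏ j' ∈ s.erase j, (1 - y j') else 0)).sum * (x j - y j) := by
      rw [← Finset.sum_add_distrib]
      apply Finset.sum_congr rfl
      intro j _; ring
    rw [hsplit]
    ring

noncomputable def extF {n k : ℕ} (F : Finset (Fin n × Fin k)) (g : F → ℝ) :
    Fin n → Fin k → ℝ :=
  fun j ℓ => if h : (j, ℓ) ∈ F then g ⟨(j, ℓ), h⟩ else 0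

lemma extF_add {n k : ℕ} (F : Finset (Fin n × Fin k)) (g g' : F → ℝ) (j : Fin n) (ℓ : Fin k) :
    extF F (g + g') j ℓ = extF F g j ℓ + extF F g' j ℓ := by
  unfold extF; split <;> simp

lemma extF_smul {n k : ℕ} (F : Finset (Fin n × Fin k)) (r : ℝ) (g : F → ℝ) (j : Fin n) (ℓ : Fin k) :
    extF F (r • g) j ℓ = r * extF F g j ℓ := by
  unfold extF; split <;> simp

lemma extF_sub {n k : ℕ} (F : Finset (Fin n × Fin k)) (g g' : F → ℝ) (j : Fin n) (ℓ : Fin k) :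
    extF F (g - g') j ℓ = extF F g j ℓ - extF F g' j ℓ := by
  unfold extF; split <;> simp

lemma exists_kernel {n m k : ℕ} (D : Finset (Fin n)) (c : Fin m → Fin k → Fin n → ℝ)
    (F : Finset (Fin n × Fin k)) (hF : F ⊆ D ×ˢ univ) (hcard : m * k + D.card < F.card) :
    ∃ d : Fin n → Fin k → ℝ, (∃ j ℓ, d j ℓ ≠ 0) ∧
      (∀ p : Fin n × Fin k, p ∉ F → d p.1 p.2 = 0) ∧
      (∀ j, ∑ ℓ, d j ℓ = 0) ∧ (∀ i ℓ, ∑ j ∈ D, c i ℓ j * d j ℓ = 0) := by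
  let φ : (F → ℝ) →ₗ[ℝ] ((Fin m × Fin k) → ℝ) × ({x // x ∈ D} → ℝ) :=
    { toFun := fun g =>
        (fun q => ∑ j ∈ D, c q.1 q.2 j * extF F g j q.2, fun j => ∑ ℓ, extF F g j.1 ℓ)
      map_add' := by
        intro g g'
        refine Prod.ext ?_ ?_
        · funext q
          simp only [Prod.fst_add, Pi.add_apply]
          rw [← Finset.sum_add_distrib]
          apply Finset.sum_congr rfl
          intro j _
          rw [extF_add]; ring
        · funext j
          simp only [Prod.snd_add, Pi.add_apply]
          rw [← Finset.sum_add_distrib]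
          apply Finset.sum_congr rfl
          intro ℓ _
          rw [extF_add]
      map_smul' := by
        intro r g
        refine Prod.ext ?_ ?_
        · funext q
          simp only [Prod.smul_fst, Pi.smul_apply, smul_eq_mul, RingHom.id_apply]
          rw [Finset.mul_sum]
          apply Finset.sum_congr rfl
          intro j _
          rw [extF_smul]; ring
        · funext j
          simp only [Prod.smul_snd, Pi.smul_apply, smul_eq_mul, RingHom.id_apply]
          rw [Finset.mul_sum]
          apply Finset.sum_congr rfl
          intro ℓ _
          rw [extF_smul] }
  have hnotinj : ¬ Function.Injective φ := by
    intro hinj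
    have hle := LinearMap.finrank_le_finrank_of_injective hinj
    have h1 : Module.finrank ℝ (F → ℝ) = F.card := by
      rw [Module.finrank_pi]; exact Fintype.card_coe F
    have h2 : Module.finrank ℝ (((Fin m × Fin k) → ℝ) × ({x // x ∈ D} → ℝ))
        = m * k + D.card := by
      rw [Module.finrank_prod, Module.finrank_pi, Module.finrank_pi]
      simp [Fintype.card_coe]
    rw [h1, h2] at hle
    omega
  rw [Function.not_injective_iff] at hnotinj
  obtain ⟨a, b, hab, hne⟩ := hnotinj
  refine ⟨extF F (a - b), ?_, ?_, ?_, ?_⟩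
  · by_contra h
    push_neg at h
    apply hne
    funext p
    have hthis := h p.1.1 p.1.2
    unfold extF at hthis
    have hmem : ((p : Fin n × Fin k).1, (p : Fin n × Fin k).2) ∈ F := by
      rw [Prod.mk.eta]; exact p.2
    rw [dif_pos hmem] at hthis
    have hpp : (⟨((p : Fin n × Fin k).1, (p : Fin n × Fin k).2), hmem⟩ : {x // x ∈ F}) = p :=
      Subtype.ext Prod.mk.eta
    rw [hpp] at hthis
    have : a p - b p = 0 := by simpa using hthis
    linarith
  · intro p hp
    unfold extF
    rw [dif_neg]
    intro h
    exact hp h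
  · intro j
    by_cases hj : j ∈ D
    · have := congrFun (congrArg Prod.snd hab) ⟨j, hj⟩
      have : ∑ ℓ, extF F a j ℓ = ∑ ℓ, extF F b j ℓ := this
      rw [← sub_eq_zero] at this
      rw [← this, ← Finset.sum_sub_distrib]
      apply Finset.sum_congr rfl
      intro ℓ _
      rw [extF_sub]
    · have hz : ∀ ℓ, extF F (a - b) j ℓ = 0 := by
        intro ℓ
        unfold extF
        rw [dif_neg]
        intro h
        have := hF h
        rw [Finset.mem_product] at this
        exact hj this.1
      simp [hz]
  · intro i ℓ
    have := congrFun (congrArg Prod.fst hab) (i, ℓ)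
    have h' : ∑ j ∈ D, c i ℓ j * extF F a j ℓ = ∑ j ∈ D, c i ℓ j * extF F b j ℓ := this
    rw [← sub_eq_zero] at h'
    rw [← h', ← Finset.sum_sub_distrib]
    apply Finset.sum_congr rfl
    intro j _
    rw [extF_sub]; ring


open Classical in
noncomputable def fracPairs {n k : ℕ} (Y : Fin n → Fin k → ℝ) (D : Finset (Fin n)) :
    Finset (Fin n × Fin k) :=
  (D ×ˢ univ).filter (fun p => ¬ (Y p.1 p.2 = 0 ∨ Y p.1 p.2 = 1))

lemma sum01 {α : Type*} (s : Finset α) (f : α → ℝ) (h : ∀ a ∈ s, f a = 0 ∨ f a = 1) :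
    ∃ r : ℕ, ∑ a ∈ s, f a = r := by
  induction s using Finset.cons_induction with
  | empty => exact ⟨0, by simp⟩
  | cons a s ha ih =>
    obtain ⟨r, hr⟩ := ih (fun b hb => h b (Finset.mem_cons_of_mem hb))
    rcases h a (Finset.mem_cons_self a s) with h0 | h1
    · exact ⟨r, by rw [Finset.sum_cons, h0, hr]; simp⟩
    · exact ⟨r + 1, by rw [Finset.sum_cons, h1, hr]; push_cast; ring⟩

open Classical in
lemma two_le_row {k : ℕ} (v : Fin k → ℝ) (h01 : ∀ ℓ, 0 ≤ v ℓ ∧ v ℓ ≤ 1)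
    (hsum : ∑ ℓ, v ℓ = 1) (hfrac : ¬ ∀ ℓ, v ℓ = 0 ∨ v ℓ = 1) :
    2 ≤ (univ.filter (fun ℓ => ¬ (v ℓ = 0 ∨ v ℓ = 1))).card := by
  rw [not_forall] at hfrac
  obtain ⟨ℓ0, hℓ0⟩ := hfrac
  have h0 : v ℓ0 ≠ 0 := fun h => hℓ0 (Or.inl h)
  have h1 : v ℓ0 ≠ 1 := fun h => hℓ0 (Or.inr h)
  by_contra hlt
  have hmem : ℓ0 ∈ univ.filter (fun ℓ => ¬ (v ℓ = 0 ∨ v ℓ = 1)) :=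
    Finset.mem_filter.2 ⟨Finset.mem_univ _, hℓ0⟩
  have hsingle : univ.filter (fun ℓ => ¬ (v ℓ = 0 ∨ v ℓ = 1)) = {ℓ0} := by
    apply Finset.eq_singleton_iff_unique_mem.2
    refine ⟨hmem, fun ℓ hℓ => ?_⟩
    exact Finset.card_le_one.1 (by omega) ℓ hℓ ℓ0 hmem
  have hothers : ∀ ℓ ∈ univ.erase ℓ0, v ℓ = 0 ∨ v ℓ = 1 := by
    intro ℓ hℓ
    by_contra hc
    have : ℓ ∈ univ.filter (fun ℓ => ¬ (v ℓ = 0 ∨ v ℓ = 1)) :=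
      Finset.mem_filter.2 ⟨Finset.mem_univ _, hc⟩
    rw [hsingle, Finset.mem_singleton] at this
    exact (Finset.ne_of_mem_erase hℓ) this
  obtain ⟨r, hr⟩ := sum01 (univ.erase ℓ0) v hothers
  have hsplit : v ℓ0 + ∑ ℓ ∈ univ.erase ℓ0, v ℓ = 1 := by
    rw [← hsum, Finset.add_sum_erase _ _ (Finset.mem_univ ℓ0)]
  rw [hr] at hsplit
  have hpos : 0 < v ℓ0 := lt_of_le_of_ne (h01 ℓ0).1 (Ne.symm h0)
  have : (r : ℝ) < 1 := by linarith
  have : r = 0 := by exact_mod_cast Nat.lt_one_iff.1 (by exact_mod_cast this)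
  rw [this] at hsplit
  simp at hsplit
  exact h1 hsplit

open Classical in
lemma fracPairs_card_lb {n k : ℕ} (Y : Fin n → Fin k → ℝ) (D : Finset (Fin n))
    (hY : IsFracColoring Y) (hfrac : ∀ j ∈ D, ¬ ∀ ℓ, Y j ℓ = 0 ∨ Y j ℓ = 1) :
    2 * D.card ≤ (fracPairs Y D).card := by
  unfold fracPairs
  rw [Finset.card_filter, Finset.sum_product]
  have key : ∀ j ∈ D, 2 ≤ ∑ ℓ : Fin k, if ¬ (Y j ℓ = 0 ∨ Y j ℓ = 1) then 1 else 0 := by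
    intro j hj
    have h2 := two_le_row (Y j) (hY j).1 (hY j).2 (hfrac j hj)
    rw [Finset.card_filter] at h2
    convert h2 using 2
  calc 2 * D.card = ∑ _j ∈ D, 2 := by rw [Finset.sum_const, smul_eq_mul, mul_comm]
    _ ≤ _ := Finset.sum_le_sum key

open Classical in
lemma step_lemma {n m k : ℕ} (D : Finset (Fin n)) (c : Fin m → Fin k → Fin n → ℝ)
    (hcard : m * k < D.card)
    (Y : Fin n → Fin k → ℝ) (hY : IsFracColoring Y)
    (hfrac : ∀ j ∈ D, ¬ ∀ ℓ, Y j ℓ = 0 ∨ Y j ℓ = 1) :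
    ∃ Y' : Fin n → Fin k → ℝ, IsFracColoring Y' ∧ (∀ j ∉ D, Y' j = Y j) ∧
      (fracPairs Y' D).card < (fracPairs Y D).card ∧
      (∀ i ℓ, ∑ j ∈ D, c i ℓ j * Y' j ℓ = ∑ j ∈ D, c i ℓ j * Y j ℓ) := by
  set F := fracPairs Y D with hFdef
  have hFsub : F ⊆ D ×ˢ univ := Finset.filter_subset _ _
  have hFcard : m * k + D.card < F.card := by
    have h2 := fracPairs_card_lb Y D hY hfrac
    rw [← hFdef] at h2
    omega
  obtain ⟨d, ⟨j1, ℓ1, hd1⟩, hsupp, hrow, hlin⟩ := exists_kernel D c F hFsub hFcard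
  have hYpos : ∀ p : Fin n × Fin k, d p.1 p.2 ≠ 0 → 0 < Y p.1 p.2 ∧ Y p.1 p.2 < 1 := by
    intro p hp
    have hpF : p ∈ F := by
      by_contra h; exact hp (hsupp p h)
    have hne := (Finset.mem_filter.1 hpF).2
    constructor
    · exact lt_of_le_of_ne ((hY p.1).1 p.2).1 (fun h => hne (Or.inl h.symm))
    · exact lt_of_le_of_ne ((hY p.1).1 p.2).2 (fun h => hne (Or.inr h))
  set cand : Fin n × Fin k → ℝ := fun p =>
    if 0 < d p.1 p.2 then (1 - Y p.1 p.2) / d p.1 p.2 else Y p.1 p.2 / (-(d p.1 p.2))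
    with hcanddef
  set supp : Finset (Fin n × Fin k) := univ.filter (fun p => d p.1 p.2 ≠ 0) with hsuppdef
  have hsuppne : supp.Nonempty := ⟨(j1, ℓ1), by simp [hsuppdef, hd1]⟩
  obtain ⟨p0, hp0, hp0min⟩ := Finset.exists_min_image supp cand hsuppne
  set ε := cand p0 with hεdef
  have hcandpos : ∀ p ∈ supp, 0 < cand p := by
    intro p hp
    have hdp : d p.1 p.2 ≠ 0 := (Finset.mem_filter.1 hp).2
    have hb := hYpos p hdp
    by_cases h : 0 < d p.1 p.2
    · simp only [hcanddef, if_pos h]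
      exact div_pos (by linarith) h
    · have hneg : d p.1 p.2 < 0 := lt_of_le_of_ne (not_lt.1 h) hdp
      simp only [hcanddef, if_neg h]
      exact div_pos hb.1 (by linarith)
  have hεpos : 0 < ε := hcandpos p0 hp0
  have hcand_mul_pos : ∀ p : Fin n × Fin k, 0 < d p.1 p.2 →
      cand p * d p.1 p.2 = 1 - Y p.1 p.2 := by
    intro p h
    simp only [hcanddef, if_pos h]
    exact div_mul_cancel₀ _ (ne_of_gt h)
  have hcand_mul_neg : ∀ p : Fin n × Fin k, d p.1 p.2 < 0 →
      cand p * d p.1 p.2 = - Y p.1 p.2 := by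
    intro p h
    simp only [hcanddef, if_neg (not_lt.2 (le_of_lt h))]
    have h2 : -(d p.1 p.2) ≠ 0 := neg_ne_zero.2 (ne_of_lt h)
    calc Y p.1 p.2 / (-(d p.1 p.2)) * d p.1 p.2
        = -(Y p.1 p.2 / (-(d p.1 p.2)) * (-(d p.1 p.2))) := by ring
      _ = - Y p.1 p.2 := by rw [div_mul_cancel₀ _ h2]
  set Y' : Fin n → Fin k → ℝ := fun j ℓ => Y j ℓ + ε * d j ℓ with hY'def
  have key : ∀ (j : Fin n) (ℓ : Fin k), d j ℓ ≠ 0 →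
      0 ≤ Y' j ℓ ∧ Y' j ℓ ≤ 1 := by
    intro j ℓ hd
    have hmem : (j, ℓ) ∈ supp := Finset.mem_filter.2 ⟨Finset.mem_univ _, hd⟩
    have hle : ε ≤ cand (j, ℓ) := hp0min _ hmem
    have hb := hYpos (j, ℓ) hd
    simp only [hY'def]
    by_cases h : 0 < d j ℓ
    · constructor
      · nlinarith [hb.1]
      · have h1 : ε * d j ℓ ≤ cand (j, ℓ) * d j ℓ :=
          mul_le_mul_of_nonneg_right hle (le_of_lt h)
        have h2 := hcand_mul_pos (j, ℓ) h
        simp only at h1 h2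
        linarith
    · have hneg : d j ℓ < 0 := lt_of_le_of_ne (not_lt.1 h) hd
      constructor
      · have h1 : cand (j, ℓ) * d j ℓ ≤ ε * d j ℓ :=
          mul_le_mul_of_nonpos_right hle (le_of_lt hneg)
        have h2 := hcand_mul_neg (j, ℓ) hneg
        simp only at h1 h2
        linarith
      · nlinarith [hb.2]
  have hint_preserved : ∀ p : Fin n × Fin k, (Y p.1 p.2 = 0 ∨ Y p.1 p.2 = 1) →
      Y' p.1 p.2 = Y p.1 p.2 := by
    intro p hp
    have hpF : p ∉ F := by
      rw [hFdef]
      unfold fracPairs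
      rw [Finset.mem_filter]
      tauto
    have : d p.1 p.2 = 0 := hsupp p hpF
    simp [hY'def, this]
  have hd0 : d p0.1 p0.2 ≠ 0 := (Finset.mem_filter.1 hp0).2
  have hp0int : Y' p0.1 p0.2 = 0 ∨ Y' p0.1 p0.2 = 1 := by
    by_cases h : 0 < d p0.1 p0.2
    · right
      have := hcand_mul_pos p0 h
      simp only [hY'def]
      rw [hεdef]
      linarith
    · left
      have hneg : d p0.1 p0.2 < 0 := lt_of_le_of_ne (not_lt.1 h) hd0
      have := hcand_mul_neg p0 hneg
      simp only [hY'def]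
      rw [hεdef]
      linarith
  have hp0F : p0 ∈ F := by
    by_contra h
    exact hd0 (hsupp p0 h)
  refine ⟨Y', ?_, ?_, ?_, ?_⟩
  · intro j
    constructor
    · intro ℓ
      by_cases hd : d j ℓ = 0
      · simp [hY'def, hd]
        exact (hY j).1 ℓ
      · exact key j ℓ hd
    · simp only [hY'def]
      rw [Finset.sum_add_distrib, ← Finset.mul_sum, hrow j, (hY j).2]
      ring
  · intro j hj
    funext ℓ
    have : d j ℓ = 0 := by
      apply hsupp (j, ℓ)
      intro h
      have := hFsub h
      rw [Finset.mem_product] at this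
      exact hj this.1
    simp [hY'def, this]
  · have hsub : fracPairs Y' D ⊆ F.erase p0 := by
      intro p hp
      unfold fracPairs at hp
      rw [Finset.mem_filter] at hp
      rw [Finset.mem_erase]
      constructor
      · intro h
        rw [h] at hp
        exact hp.2 hp0int
      · rw [hFdef]
        unfold fracPairs
        rw [Finset.mem_filter]
        refine ⟨hp.1, ?_⟩
        intro h
        exact hp.2 (by rw [hint_preserved p h]; exact h)
    calc (fracPairs Y' D).card ≤ (F.erase p0).card := Finset.card_le_card hsub
      _ = F.card - 1 := Finset.card_erase_of_mem hp0F
      _ < F.card := by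
          have : 0 < F.card := Finset.card_pos.2 ⟨p0, hp0F⟩
          omega
  · intro i ℓ
    simp only [hY'def]
    have : ∀ j ∈ D, c i ℓ j * (Y j ℓ + ε * d j ℓ)
        = c i ℓ j * Y j ℓ + ε * (c i ℓ j * d j ℓ) := by
      intro j _; ring
    rw [Finset.sum_congr rfl this, Finset.sum_add_distrib, ← Finset.mul_sum, hlin i ℓ]
    ring

open Classical in
lemma round_lemma {n m k : ℕ} (D : Finset (Fin n)) (c : Fin m → Fin k → Fin n → ℝ)
    (hcard : m * k < D.card) :
    ∀ N : ℕ, ∀ Y : Fin n → Fin k → ℝ, IsFracColoring Y →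
      (fracPairs Y D).card ≤ N →
      (∀ j ∈ D, ¬ ∀ ℓ, Y j ℓ = 0 ∨ Y j ℓ = 1) →
      ∃ Y', IsFracColoring Y' ∧ (∀ j ∉ D, Y' j = Y j) ∧
        (∃ j ∈ D, ∀ ℓ, Y' j ℓ = 0 ∨ Y' j ℓ = 1) ∧
        (∀ i ℓ, ∑ j ∈ D, c i ℓ j * Y' j ℓ = ∑ j ∈ D, c i ℓ j * Y j ℓ) := by
  intro N
  induction N with
  | zero =>
    intro Y hY hle hfrac
    exfalso
    have hD : 0 < D.card := lt_of_le_of_lt (Nat.zero_le _) hcard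
    have h2 := fracPairs_card_lb Y D hY hfrac
    omega
  | succ N ih =>
    intro Y hY hle hfrac
    obtain ⟨Y'', hY'', hagree, hlt, hsums⟩ := step_lemma D c hcard Y hY hfrac
    by_cases hdone : ∀ j ∈ D, ¬ ∀ ℓ, Y'' j ℓ = 0 ∨ Y'' j ℓ = 1
    · obtain ⟨Y', h1, h2, h3, h4⟩ := ih Y'' hY'' (by omega) hdone
      refine ⟨Y', h1, ?_, h3, ?_⟩
      · intro j hj; rw [h2 j hj, hagree j hj]
      · intro i ℓ; rw [h4 i ℓ, hsums i ℓ]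
    · push_neg at hdone
      obtain ⟨j0, hj0, hint⟩ := hdone
      exact ⟨Y'', hY'', hagree, ⟨j0, hj0, hint⟩, hsums⟩


/-- given a fractional `k`-coloring `Y` with fractional element set `Z`
and an independent set `D ⊆ Z` with `|D| > mk`, there is a fractional `k`-coloring
`Y'` agreeing with `Y` outside `D`, with at most `|Z| − 1` fractional elements and
the same multilinear-extension values. -/
theorem round_one_more_element
    (n m t k : ℕ) (hk : 2 ≤ k)
    (S : Fin m → Multiset (Finset (Fin n)))
    (hsparse : ∀ j : Fin n, (∑ i, ((S i).filter (fun s' => j ∈ s')).card) ≤ t)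
    (Y : Fin n → Fin k → ℝ) (hY : IsFracColoring Y)
    (Z : Finset (Fin n)) (hZ : ∀ j : Fin n, j ∈ Z ↔ ¬ (∀ ℓ, Y j ℓ = 0 ∨ Y j ℓ = 1))
    (D : Finset (Fin n)) (hDZ : D ⊆ Z)
    (hDind : ∀ i : Fin m, ∀ s' ∈ S i, (s' ∩ D).card ≤ 1)
    (hDcard : m * k < D.card) :
    ∃ Y' : Fin n → Fin k → ℝ, IsFracColoring Y' ∧
      (∀ j ∉ D, Y' j = Y j) ∧
      (∃ Z' : Finset (Fin n),
        (∀ j : Fin n, j ∈ Z' ↔ ¬ (∀ ℓ, Y' j ℓ = 0 ∨ Y' j ℓ = 1)) ∧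
        Z'.card ≤ Z.card - 1) ∧
      (∀ (i : Fin m) (ℓ : Fin k),
        mlext (cov (S i)) (fun j => Y' j ℓ) = mlext (cov (S i)) (fun j => Y j ℓ)) := by
  classical
  set c : Fin m → Fin k → Fin n → ℝ := fun i ℓ j =>
    ((S i).map (fun s => if j ∈ s then ∏ j' ∈ s.erase j, (1 - Y j' ℓ) else 0)).sum with hc
  have hfrac0 : ∀ j ∈ D, ¬ ∀ ℓ, Y j ℓ = 0 ∨ Y j ℓ = 1 := fun j hj => (hZ j).1 (hDZ hj)
  obtain ⟨Y', h1, h2, ⟨j0, hj0D, hj0int⟩, h4⟩ :=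
    round_lemma D c hDcard (fracPairs Y D).card Y hY le_rfl hfrac0
  refine ⟨Y', h1, h2, ?_, ?_⟩
  · refine ⟨univ.filter (fun j => ¬ ∀ ℓ, Y' j ℓ = 0 ∨ Y' j ℓ = 1), ?_, ?_⟩
    · intro j; simp
    · have hsub : univ.filter (fun j => ¬ ∀ ℓ, Y' j ℓ = 0 ∨ Y' j ℓ = 1) ⊆ Z.erase j0 := by
        intro j hj
        rw [Finset.mem_filter] at hj
        rw [Finset.mem_erase]
        constructor
        · intro h
          rw [h] at hj
          exact hj.2 hj0int
        · by_cases hD : j ∈ D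
          · exact hDZ hD
          · rw [hZ j]
            intro h
            apply hj.2
            intro ℓ
            rw [h2 j hD]
            exact h ℓ
      calc (univ.filter (fun j => ¬ ∀ ℓ, Y' j ℓ = 0 ∨ Y' j ℓ = 1)).card
          ≤ (Z.erase j0).card := Finset.card_le_card hsub
        _ = Z.card - 1 := Finset.card_erase_of_mem (hDZ hj0D)
  · intro i ℓ
    have hxy : ∀ j ∉ D, (fun j => Y' j ℓ) j = (fun j => Y j ℓ) j := by
      intro j hj
      simp only
      rw [h2 j hj]
    have key := mlext_cov_affine (S i) D (hDind i) (fun j => Y' j ℓ) (fun j => Y j ℓ) hxy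
    rw [key]
    have hs : ∑ j ∈ D,
        ((S i).map (fun s => if j ∈ s then ∏ j' ∈ s.erase j, (1 - Y j' ℓ) else 0)).sum
          * (Y' j ℓ - Y j ℓ)
        = (∑ j ∈ D, c i ℓ j * Y' j ℓ) - ∑ j ∈ D, c i ℓ j * Y j ℓ := by
      rw [← Finset.sum_sub_distrib]
      apply Finset.sum_congr rfl
      intro j _
      rw [hc]
      ring
    rw [hs, h4 i ℓ, sub_self, add_zero]
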